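/- arXiv:2510.05628 — 4 statements merged into one kernel-verified Lean document; each statement's English description precedes it below -/
import Mathlib

section
/- Let A₁,…,A_h be pairwise distinct points of ℙ¹ and B₁,…,B_v pairwise distinct points of ℙ¹. Then the ideal generated by the two products H_{A₁}⋯H_{A_h} and V_{B₁}⋯V_{B_v} equals the defining ideal of the grid: Ideal.span {H_{A₁}⋯H_{A_h}, V_{B₁}⋯V_{B_v}} = ⋂_{1≤i≤h, 1≤j≤v} ⟨H_{Aᵢ}, V_{Bⱼ}⟩. -/
/- Common setup: R = ℂ[x₀,x₁,y₀,y₁] as MvPolynomial (Fin 4) ℂ with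
   x₀ = X 0, x₁ = X 1, y₀ = X 2, y₁ = X 3.
   `Hf a` is the horizontal form a₁x₀ - a₀x₁ of the point a = [a₀:a₁] ∈ ℙ¹;
   `Vf b` is the vertical form b₁y₀ - b₀y₁;
   `cross a b ≠ 0` says the (nonzero) pairs a, b are non-proportional,
   i.e. define distinct points of ℙ¹. -/

open MvPolynomial

noncomputable section

abbrev R : Type := MvPolynomial (Fin 4) ℂ

def Hf (a : ℂ × ℂ) : R := C a.2 * X 0 - C a.1 * X 1

def Vf (b : ℂ × ℂ) : R := C b.2 * X 2 - C b.1 * X 3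

def cross (a b : ℂ × ℂ) : ℂ := a.1 * b.2 - a.2 * b.1

/-- The defining ideal of the point P = A×B of ℙ¹×ℙ¹. -/
def Ipt (P : (ℂ × ℂ) × (ℂ × ℂ)) : Ideal R := Ideal.span {Hf P.1, Vf P.2}

/-- The defining ideal of a finite set of points (I_∅ = R = ⊤). -/
def Ipts (X : Finset ((ℂ × ℂ) × (ℂ × ℂ))) : Ideal R := X.inf Ipt

/-- The defining ideal of a set of points (I_∅ = R = ⊤). -/
def IptsSet (W : Set ((ℂ × ℂ) × (ℂ × ℂ))) : Ideal R := ⨅ P ∈ W, Ipt P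

/-- Bihomogeneous: homogeneous separately in x₀,x₁ and in y₀,y₁. -/
def Bihom (f : R) : Prop :=
  ∃ a b : ℕ, IsWeightedHomogeneous (![1,1,0,0] : Fin 4 → ℕ) f a ∧
    IsWeightedHomogeneous (![0,0,1,1] : Fin 4 → ℕ) f b

/-- `G` minimally generates `I`. -/
def MinGen (G : Finset R) (I : Ideal R) : Prop :=
  Ideal.span (G : Set R) = I ∧ ∀ g ∈ G, Ideal.span ((G : Set R) \ {g}) ≠ I

/-! Each point ideal `⟨H_A, V_B⟩` is prime: it is the kernel of the substitution
`x ↦ x - H_A(x) w`, `y ↦ y - V_B(y) z` (with `H_A(w) = V_B(z) = 1`), which is the identity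
modulo `⟨H_A, V_B⟩`. Evaluating at the point shows that `H_{A'}` and `V_{B'}` lie outside it
for `A' ≠ A`, `B' ≠ B`, so products of such forms are nonzerodivisors modulo `⟨H_A, V_B⟩`
and modulo intersections of such ideals. Now `⟨x, c⟩ ∩ ⟨y, c⟩ = ⟨xy, c⟩` whenever `y` is a
nonzerodivisor modulo `⟨x, c⟩`; applied along each row of the grid and then across the rows,
this turns the intersection of the point ideals into `⟨∏ H_{Aᵢ}, ∏ V_{Bⱼ}⟩`. -/

open Ideal

section PairSpans

variable {S : Type*} [CommRing S]

theorem span_mul_pair_eq_inf {x y c : S}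
    (hy : ∀ β, β * y ∈ span {x, c} → β ∈ span {x, c}) :
    span {x * y, c} = span {x, c} ⊓ span {y, c} := by
  refine le_antisymm (le_inf ?_ ?_) fun p ⟨hpx, hpy⟩ => ?_
  · rw [span_le, Set.insert_subset_iff, Set.singleton_subset_iff]
    exact ⟨mul_mem_right _ _ (subset_span (by simp)), subset_span (by simp)⟩
  · rw [span_le, Set.insert_subset_iff, Set.singleton_subset_iff]
    exact ⟨mul_mem_left _ _ (subset_span (by simp)), subset_span (by simp)⟩
  obtain ⟨α, β, rfl⟩ := mem_span_pair.mp hpy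
  have hαy : α * y ∈ span {x, c} := by
    simpa using sub_mem hpx (mul_mem_left _ β (subset_span (by simp) : c ∈ span {x, c}))
  obtain ⟨γ, δ, rfl⟩ := mem_span_pair.mp (hy α hαy)
  exact mem_span_pair.mpr ⟨γ, δ * y + β, by ring⟩

theorem iInf_span_pair_eq_span_prod_pair {ι : Type*} [DecidableEq ι] (s : Finset ι)
    (a : ι → S) (c : S)
    (hreg : ∀ i ∈ s, ∀ k ∈ s, i ≠ k → ∀ β, β * a k ∈ span {a i, c} → β ∈ span {a i, c}) :
    ⨅ i ∈ s, span {a i, c} = span {∏ i ∈ s, a i, c} := by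
  induction s using Finset.induction_on with
  | empty => simpa using (eq_top_of_isUnit_mem _ (subset_span (by simp)) isUnit_one).symm
  | insert i s hi ih =>
    have hprod : ∀ β, β * ∏ k ∈ s, a k ∈ span {a i, c} → β ∈ span {a i, c} := by
      refine Finset.prod_induction _ (fun y => ∀ β, β * y ∈ span {a i, c} → β ∈ span {a i, c})
        (fun y z hy hz β hβ => hy β (hz (β * y) (by rwa [mul_assoc]))) (by simp)
        fun k hk => hreg i (by simp) k (by simp [hk]) (by rintro rfl; exact hi hk)
    rw [Finset.iInf_insert, Finset.prod_insert hi, span_mul_pair_eq_inf hprod,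
      ih fun i hi k hk => hreg i (by simp [hi]) k (by simp [hk])]

end PairSpans

theorem exists_cross_eq_one {a : ℂ × ℂ} (ha : a ≠ 0) : ∃ w, cross w a = 1 := by
  obtain ⟨a₁, a₂⟩ := a
  by_cases h : a₂ = 0
  · have h₁ : a₁ ≠ 0 := by rintro rfl; simp_all
    exact ⟨(0, -a₁⁻¹), by simp [cross, h₁]⟩
  · exact ⟨(a₂⁻¹, 0), by simp [cross, h]⟩

theorem Ipt_eq_ker_aeval {a b w z : ℂ × ℂ} (hw : cross w a = 1) (hz : cross z b = 1) :
    Ipt (a, b) = RingHom.ker (aeval ![X 0 - C w.1 * Hf a, X 1 - C w.2 * Hf a,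
      X 2 - C z.1 * Vf b, X 3 - C z.2 * Vf b] : R →ₐ[ℂ] R) := by
  set g : Fin 4 → R := ![X 0 - C w.1 * Hf a, X 1 - C w.2 * Hf a,
    X 2 - C z.1 * Vf b, X 3 - C z.2 * Vf b]
  have hHf : Hf a ∈ Ipt (a, b) := subset_span (by simp)
  have hVf : Vf b ∈ Ipt (a, b) := subset_span (by simp)
  have hg : ∀ i, g i - X i ∈ Ipt (a, b) := by
    intro i
    fin_cases i <;> simp [g, mul_mem_left _ _ hHf, mul_mem_left _ _ hVf]
  refine le_antisymm ?_ fun f hf => ?_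
  · rw [Ipt, span_le, Set.insert_subset_iff, Set.singleton_subset_iff]
    constructor <;> simp only [SetLike.mem_coe, RingHom.mem_ker]
    · have hw' := congrArg (C : ℂ → R) hw
      simp only [cross, map_sub, map_mul, map_one] at hw'
      simp only [g, Hf, aeval_X, map_sub, map_mul, algHom_C, algebraMap_eq, Matrix.cons_val]
      linear_combination (C a.1 * X 1 - C a.2 * X 0) * hw'
    · have hz' := congrArg (C : ℂ → R) hz
      simp only [cross, map_sub, map_mul, map_one] at hz'
      simp only [g, Vf, aeval_X, map_sub, map_mul, algHom_C, algebraMap_eq, Matrix.cons_val]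
      linear_combination (C b.1 * X 3 - C b.2 * X 2) * hz'
  · have hcomp : (Ideal.Quotient.mkₐ ℂ (Ipt (a, b))).comp (aeval g) =
        Ideal.Quotient.mkₐ ℂ (Ipt (a, b)) :=
      algHom_ext fun i => by simpa [Ideal.Quotient.eq] using hg i
    have := congrArg (· f) hcomp
    rw [RingHom.mem_ker] at hf
    simp only [AlgHom.comp_apply, hf, map_zero, Ideal.Quotient.mkₐ_eq_mk] at this
    exact Ideal.Quotient.eq_zero_iff_mem.mp this.symm

theorem Ipt_isPrime {a b : ℂ × ℂ} (ha : a ≠ 0) (hb : b ≠ 0) : (Ipt (a, b)).IsPrime := by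
  obtain ⟨w, hw⟩ := exists_cross_eq_one ha
  obtain ⟨z, hz⟩ := exists_cross_eq_one hb
  rw [Ipt_eq_ker_aeval hw hz]
  exact RingHom.ker_isPrime _

theorem Ipt_le_ker_eval (a b : ℂ × ℂ) :
    Ipt (a, b) ≤ RingHom.ker (eval ![a.1, a.2, b.1, b.2] : R →+* ℂ) := by
  rw [Ipt, span_le, Set.insert_subset_iff, Set.singleton_subset_iff]
  constructor <;> simp [Hf, Vf, mul_comm]

theorem Hf_notMem_Ipt {a a' : ℂ × ℂ} (b : ℂ × ℂ) (h : cross a a' ≠ 0) : Hf a' ∉ Ipt (a, b) :=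
  fun hmem => h <| by simpa [Hf, cross, mul_comm] using Ipt_le_ker_eval a b hmem

theorem Vf_notMem_Ipt (a : ℂ × ℂ) {b b' : ℂ × ℂ} (h : cross b b' ≠ 0) : Vf b' ∉ Ipt (a, b) :=
  fun hmem => h <| by simpa [Vf, cross, mul_comm] using Ipt_le_ker_eval a b hmem

theorem iInf_Ipt_eq_span_Hf_prod {ι : Type*} [DecidableEq ι] {a : ℂ × ℂ} (ha : a ≠ 0)
    (B : ι → ℂ × ℂ) (s : Finset ι) (hB0 : ∀ j ∈ s, B j ≠ 0)
    (hBd : ∀ j ∈ s, ∀ j' ∈ s, j ≠ j' → cross (B j) (B j') ≠ 0) :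
    ⨅ j ∈ s, Ipt (a, B j) = span {Hf a, ∏ j ∈ s, Vf (B j)} := by
  have hswap (b : ℂ × ℂ) : Ipt (a, b) = span {Vf b, Hf a} := by rw [Ipt, Set.pair_comm]
  simp only [hswap]
  rw [Set.pair_comm]
  refine iInf_span_pair_eq_span_prod_pair s _ _ fun j hj k hk hjk β hβ => ?_
  rw [← hswap] at hβ ⊢
  exact ((Ipt_isPrime ha (hB0 j hj)).mem_or_mem hβ).resolve_right
    (Vf_notMem_Ipt a (hBd j hj k hk hjk))

theorem statement2_general (h v : ℕ)
    (A : ℕ → ℂ × ℂ) (B : ℕ → ℂ × ℂ)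
    (hA0 : ∀ i ∈ Finset.Icc 1 h, A i ≠ 0) (hB0 : ∀ j ∈ Finset.Icc 1 v, B j ≠ 0)
    (hAd : ∀ i ∈ Finset.Icc 1 h, ∀ i' ∈ Finset.Icc 1 h, i ≠ i' → cross (A i) (A i') ≠ 0)
    (hBd : ∀ j ∈ Finset.Icc 1 v, ∀ j' ∈ Finset.Icc 1 v, j ≠ j' → cross (B j) (B j') ≠ 0) :
    Ideal.span {∏ i ∈ Finset.Icc 1 h, Hf (A i), ∏ j ∈ Finset.Icc 1 v, Vf (B j)} =
      ⨅ i ∈ Finset.Icc 1 h, ⨅ j ∈ Finset.Icc 1 v, Ipt (A i, B j) := by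
  have hcol (i) (hi : i ∈ Finset.Icc 1 h) :
      ⨅ j ∈ Finset.Icc 1 v, Ipt (A i, B j) = span {Hf (A i), ∏ j ∈ Finset.Icc 1 v, Vf (B j)} :=
    iInf_Ipt_eq_span_Hf_prod (hA0 i hi) B _ hB0 hBd
  rw [iInf_congr fun i => iInf_congr (hcol i)]
  refine (iInf_span_pair_eq_span_prod_pair _ _ _ fun i hi k hk hik β hβ => ?_).symm
  simp only [← hcol i hi, Submodule.mem_iInf] at hβ ⊢
  exact fun j hj => ((Ipt_isPrime (hA0 i hi) (hB0 j hj)).mem_or_mem (hβ j hj)).resolve_right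
    (Hf_notMem_Ipt _ (hAd i hi k hk hik))

/-- The ideal generated by the two products H_{A₁}⋯H_{A_h} and V_{B₁}⋯V_{B_v}
equals the defining ideal of the grid {Aᵢ×Bⱼ}. -/
theorem statement2 (h v : ℕ) (hh : 0 < h) (hv : 0 < v)
    (A : ℕ → ℂ × ℂ) (B : ℕ → ℂ × ℂ)
    (hA0 : ∀ i ∈ Finset.Icc 1 h, A i ≠ 0) (hB0 : ∀ j ∈ Finset.Icc 1 v, B j ≠ 0)
    (hAd : ∀ i ∈ Finset.Icc 1 h, ∀ i' ∈ Finset.Icc 1 h, i ≠ i' → cross (A i) (A i') ≠ 0)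
    (hBd : ∀ j ∈ Finset.Icc 1 v, ∀ j' ∈ Finset.Icc 1 v, j ≠ j' → cross (B j) (B j') ≠ 0) :
    Ideal.span {∏ i ∈ Finset.Icc 1 h, Hf (A i), ∏ j ∈ Finset.Icc 1 v, Vf (B j)} =
      ⨅ i ∈ Finset.Icc 1 h, ⨅ j ∈ Finset.Icc 1 v, Ipt (A i, B j) :=
  statement2_general h v A B hA0 hB0 hAd hBd
end
end

section
/- Let X be a Ferrers configuration of points of ℙ¹×ℙ¹ and let H = c₁x₀ − c₀x₁ with (c₀,c₁) ≠ (0,0) be any degree (1,0) form. Let X∖H = {P ∈ X : H ∉ I_P} be the set of points of X not lying on the line H = 0. Then ⟨H⟩ ⊓ I_X = ⟨H⟩ * I_{X∖H}, and X∖H is again a Ferrers configuration (or empty). The analogous statement holds for any degree (0,1) form V = c₁y₀ − c₀y₁: ⟨V⟩ ⊓ I_X = ⟨V⟩ * I_{X∖V}, with X∖V a Ferrers configuration (or empty). -/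
/-!
Each `I_P` is prime, being the kernel of the parametrisation `(s, t) ↦ (s a, t b)` of the
point `P = a × b`. So if `r H ∈ I_X`, then `r ∈ I_P` for every `P ∈ X` off the line `H = 0`,
which gives `⟨H⟩ ⊓ I_X = ⟨H⟩ * I_{X∖H}`.

Since the `Aᵢ` are pairwise distinct, a line `H = 0` contains at most one row `i = k` of a
Ferrers configuration, and deleting that row leaves a Ferrers configuration. Likewise `V = 0`
contains at most one column `j = k`; deleting it shortens by one exactly the rows reaching
column `k`, which keeps the row lengths decreasing, and the rows left empty form a final segment.
-/

/- Common setup: R = ℂ[x₀,x₁,y₀,y₁] as MvPolynomial (Fin 4) ℂ with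
   x₀ = X 0, x₁ = X 1, y₀ = X 2, y₁ = X 3.
   `Hf a` is the horizontal form a₁x₀ - a₀x₁ of the point a = [a₀:a₁] ∈ ℙ¹;
   `Vf b` is the vertical form b₁y₀ - b₀y₁;
   `cross a b ≠ 0` says the (nonzero) pairs a, b are non-proportional,
   i.e. define distinct points of ℙ¹. -/

open MvPolynomial

noncomputable section

/-- A Ferrers configuration {Aᵢ×Bⱼ : 1 ≤ i ≤ h, 1 ≤ j ≤ αᵢ} for pairwise distinct
    points A₁,…,A_h of ℙ¹, pairwise distinct B₁,…,B_{α₁} of ℙ¹ and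
    α₁ ≥ ⋯ ≥ α_h ≥ 1.  These are exactly the ACM finite sets of points of ℙ¹×ℙ¹. -/
def IsFerrers (W : Set ((ℂ × ℂ) × (ℂ × ℂ))) : Prop :=
  ∃ (h : ℕ) (α : ℕ → ℕ) (A B : ℕ → ℂ × ℂ),
    1 ≤ h ∧
    (∀ i, 1 ≤ i → i ≤ h → 1 ≤ α i) ∧
    (∀ i, 1 ≤ i → i + 1 ≤ h → α (i + 1) ≤ α i) ∧
    (∀ i, 1 ≤ i → i ≤ h → A i ≠ 0) ∧
    (∀ j, 1 ≤ j → j ≤ α 1 → B j ≠ 0) ∧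
    (∀ i i', 1 ≤ i → i ≤ h → 1 ≤ i' → i' ≤ h → i ≠ i' → cross (A i) (A i') ≠ 0) ∧
    (∀ j j', 1 ≤ j → j ≤ α 1 → 1 ≤ j' → j' ≤ α 1 → j ≠ j' → cross (B j) (B j') ≠ 0) ∧
    W = {P | ∃ i j, 1 ≤ i ∧ i ≤ h ∧ 1 ≤ j ∧ j ≤ α i ∧ P = (A i, B j)}

theorem Ideal.span_singleton_inf_biInf_eq_mul {S ι : Type*} [CommRing S] {I : ι → Ideal S}
    {s : Set ι} (hI : ∀ i ∈ s, (I i).IsPrime) (f : S) :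
    Ideal.span {f} ⊓ ⨅ i ∈ s, I i = Ideal.span {f} * ⨅ i ∈ {i ∈ s | f ∉ I i}, I i := by
  apply le_antisymm
  · rintro g ⟨hgf, hgI⟩
    obtain ⟨r, rfl⟩ := Ideal.mem_span_singleton'.mp hgf
    refine Ideal.mem_span_singleton_mul.mpr ⟨r, ?_, mul_comm f r⟩
    simp only [SetLike.mem_coe, Submodule.mem_iInf] at hgI ⊢
    rintro i ⟨hi, hfi⟩
    exact ((hI i hi).mem_or_mem (hgI i hi)).resolve_right hfi
  · refine le_inf Ideal.mul_le_left (le_iInf₂ fun i hi => ?_)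
    by_cases hfi : f ∈ I i
    · exact Ideal.mul_le_left.trans ((Ideal.span_singleton_le_iff_mem _).mpr hfi)
    · exact Ideal.mul_le_right.trans (iInf₂_le i ⟨hi, hfi⟩)

lemma exists_mul_add_mul_eq_one {a : ℂ × ℂ} (ha : a ≠ 0) :
    ∃ u : ℂ × ℂ, a.1 * u.1 + a.2 * u.2 = 1 := by
  by_cases h1 : a.1 = 0
  · have h2 : a.2 ≠ 0 := fun h2 => ha (Prod.ext h1 h2)
    exact ⟨(0, a.2⁻¹), by simp [h2]⟩
  · exact ⟨(a.1⁻¹, 0), by simp [h1]⟩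

lemma exists_eq_smul_of_cross_eq_zero {a c : ℂ × ℂ} (ha : a ≠ 0) (h : cross c a = 0) :
    ∃ l : ℂ, c = l • a := by
  obtain ⟨u, hu⟩ := exists_mul_add_mul_eq_one ha
  simp only [cross] at h
  refine ⟨c.1 * u.1 + c.2 * u.2, Prod.ext ?_ ?_⟩
  · simp only [Prod.smul_fst, smul_eq_mul]
    linear_combination (-c.1) * hu + u.2 * h
  · simp only [Prod.smul_snd, smul_eq_mul]
    linear_combination (-c.2) * hu - u.1 * h

lemma cross_eq_zero_comm {a b : ℂ × ℂ} : cross a b = 0 ↔ cross b a = 0 := by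
  simp only [cross]
  constructor <;> intro h <;> linear_combination -h

lemma cross_eq_zero_of_cross_eq_zero {a a' c : ℂ × ℂ} (hc : c ≠ 0) (ha : cross c a = 0)
    (ha' : cross c a' = 0) : cross a a' = 0 := by
  obtain ⟨l, rfl⟩ := exists_eq_smul_of_cross_eq_zero hc (cross_eq_zero_comm.mp ha)
  obtain ⟨l', rfl⟩ := exists_eq_smul_of_cross_eq_zero hc (cross_eq_zero_comm.mp ha')
  simp only [cross, Prod.smul_fst, Prod.smul_snd, smul_eq_mul]
  ring

lemma Hf_smul (l : ℂ) (a : ℂ × ℂ) : Hf (l • a) = C l * Hf a := by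
  simp only [Hf, Prod.smul_fst, Prod.smul_snd, smul_eq_mul, map_mul]
  ring

lemma Vf_smul (l : ℂ) (b : ℂ × ℂ) : Vf (l • b) = C l * Vf b := by
  simp only [Vf, Prod.smul_fst, Prod.smul_snd, smul_eq_mul, map_mul]
  ring

/-- The ring map of the parametrisation `(s, t) ↦ (s • a, t • b)` of the cone over `a × b`. -/
def pointParam (a b : ℂ × ℂ) : R →ₐ[ℂ] MvPolynomial (Fin 2) ℂ :=
  aeval ![C a.1 * X 0, C a.2 * X 0, C b.1 * X 1, C b.2 * X 1]

lemma pointParam_Hf (a b c : ℂ × ℂ) : pointParam a b (Hf c) = -(C (cross c a) * X 0) := by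
  simp only [pointParam, Hf, cross, map_sub, map_mul, aeval_C, aeval_X, algebraMap_eq,
    Matrix.cons_val_zero, Matrix.cons_val_one]
  ring

lemma pointParam_Vf (a b d : ℂ × ℂ) : pointParam a b (Vf d) = -(C (cross d b) * X 1) := by
  simp only [pointParam, Vf, cross, map_sub, map_mul, aeval_C, aeval_X, algebraMap_eq,
    Matrix.cons_val]
  ring

lemma Ipt_le_ker_pointParam (a b : ℂ × ℂ) : Ipt (a, b) ≤ RingHom.ker (pointParam a b) := by
  rw [Ipt, Ideal.span_le]
  rintro f (rfl | rfl) <;> simp [pointParam_Hf, pointParam_Vf, cross, mul_comm]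

lemma Ipt_eq_ker_pointParam {a b : ℂ × ℂ} (ha : a ≠ 0) (hb : b ≠ 0) :
    Ipt (a, b) = RingHom.ker (pointParam a b) := by
  refine le_antisymm (Ipt_le_ker_pointParam a b) fun f hf => ?_
  obtain ⟨u, hu⟩ := exists_mul_add_mul_eq_one ha
  obtain ⟨v, hv⟩ := exists_mul_add_mul_eq_one hb
  -- a right inverse of `pointParam a b` modulo `Ipt (a, b)`
  let σ : MvPolynomial (Fin 2) ℂ →ₐ[ℂ] R :=
    aeval ![C u.1 * X 0 + C u.2 * X 1, C v.1 * X 2 + C v.2 * X 3]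
  have hu' : C a.1 * C u.1 + C a.2 * C u.2 = (1 : R) := by
    rw [← map_mul, ← map_mul, ← map_add, hu, map_one]
  have hv' : C b.1 * C v.1 + C b.2 * C v.2 = (1 : R) := by
    rw [← map_mul, ← map_mul, ← map_add, hv, map_one]
  have hHf : Hf a ∈ Ipt (a, b) := Ideal.subset_span (Set.mem_insert _ _)
  have hVf : Vf b ∈ Ipt (a, b) := Ideal.subset_span (Set.mem_insert_of_mem _ rfl)
  have hsec : (Ideal.Quotient.mkₐ ℂ (Ipt (a, b))).comp (σ.comp (pointParam a b)) =
      Ideal.Quotient.mkₐ ℂ (Ipt (a, b)) := by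
    refine MvPolynomial.algHom_ext fun i => ?_
    simp only [AlgHom.comp_apply, Ideal.Quotient.mkₐ_eq_mk, Ideal.Quotient.eq]
    fin_cases i <;> simp only [σ, pointParam, Fin.isValue, Fin.zero_eta, Fin.mk_one,
      Fin.reduceFinMk, aeval_X, aeval_C, algebraMap_eq, map_mul, Matrix.cons_val]
    · convert Ideal.mul_mem_left _ (-C u.2) hHf using 1; rw [Hf]; linear_combination X 0 * hu'
    · convert Ideal.mul_mem_left _ (C u.1) hHf using 1; rw [Hf]; linear_combination X 1 * hu'
    · convert Ideal.mul_mem_left _ (-C v.2) hVf using 1; rw [Vf]; linear_combination X 2 * hv'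
    · convert Ideal.mul_mem_left _ (C v.1) hVf using 1; rw [Vf]; linear_combination X 3 * hv'
  rw [← Ideal.Quotient.eq_zero_iff_mem, ← Ideal.Quotient.mkₐ_eq_mk ℂ, ← hsec]
  simp [RingHom.mem_ker.mp hf]

lemma Ipt_isPrime_s5 {P : (ℂ × ℂ) × (ℂ × ℂ)} (h1 : P.1 ≠ 0) (h2 : P.2 ≠ 0) : (Ipt P).IsPrime := by
  rw [Ipt_eq_ker_pointParam h1 h2]
  exact RingHom.ker_isPrime _

lemma Hf_mem_Ipt_iff {P : (ℂ × ℂ) × (ℂ × ℂ)} (hP : P.1 ≠ 0) (c : ℂ × ℂ) :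
    Hf c ∈ Ipt P ↔ cross c P.1 = 0 := by
  refine ⟨fun hc => ?_, fun hc => ?_⟩
  · have := RingHom.mem_ker.mp (Ipt_le_ker_pointParam P.1 P.2 hc)
    simpa [pointParam_Hf, X_ne_zero] using this
  · obtain ⟨l, rfl⟩ := exists_eq_smul_of_cross_eq_zero hP hc
    rw [Hf_smul]
    exact Ideal.mul_mem_left _ _ (Ideal.subset_span (Set.mem_insert _ _))

lemma Vf_mem_Ipt_iff {P : (ℂ × ℂ) × (ℂ × ℂ)} (hP : P.2 ≠ 0) (d : ℂ × ℂ) :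
    Vf d ∈ Ipt P ↔ cross d P.2 = 0 := by
  refine ⟨fun hd => ?_, fun hd => ?_⟩
  · have := RingHom.mem_ker.mp (Ipt_le_ker_pointParam P.1 P.2 hd)
    simpa [pointParam_Vf, X_ne_zero] using this
  · obtain ⟨l, rfl⟩ := exists_eq_smul_of_cross_eq_zero hP hd
    rw [Vf_smul]
    exact Ideal.mul_mem_left _ _ (Ideal.subset_span (Set.mem_insert_of_mem _ rfl))

/-- The index data of a Ferrers configuration, apart from `1 ≤ h`. -/
structure FerrersData (h : ℕ) (α : ℕ → ℕ) (A B : ℕ → ℂ × ℂ) : Prop where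
  one_le_alpha : ∀ i, 1 ≤ i → i ≤ h → 1 ≤ α i
  alpha_succ_le : ∀ i, 1 ≤ i → i + 1 ≤ h → α (i + 1) ≤ α i
  A_ne_zero : ∀ i, 1 ≤ i → i ≤ h → A i ≠ 0
  B_ne_zero : ∀ j, 1 ≤ j → j ≤ α 1 → B j ≠ 0
  cross_A_ne_zero : ∀ i i', 1 ≤ i → i ≤ h → 1 ≤ i' → i' ≤ h → i ≠ i' → cross (A i) (A i') ≠ 0
  cross_B_ne_zero :
    ∀ j j', 1 ≤ j → j ≤ α 1 → 1 ≤ j' → j' ≤ α 1 → j ≠ j' → cross (B j) (B j') ≠ 0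

def ferrersSet (h : ℕ) (α : ℕ → ℕ) (A B : ℕ → ℂ × ℂ) : Set ((ℂ × ℂ) × (ℂ × ℂ)) :=
  {P | ∃ i j, 1 ≤ i ∧ i ≤ h ∧ 1 ≤ j ∧ j ≤ α i ∧ P = (A i, B j)}

lemma ferrersSet_zero (α : ℕ → ℕ) (A B : ℕ → ℂ × ℂ) : ferrersSet 0 α A B = ∅ := by
  ext P
  simp only [ferrersSet, Set.mem_ofPred_eq, Set.mem_empty_iff_false, iff_false]
  omega

lemma isFerrers_iff {W : Set ((ℂ × ℂ) × (ℂ × ℂ))} :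
    IsFerrers W ↔ ∃ h α A B, 1 ≤ h ∧ FerrersData h α A B ∧ W = ferrersSet h α A B := by
  constructor
  · rintro ⟨h, α, A, B, hh, h1, h2, h3, h4, h5, h6, hW⟩
    exact ⟨h, α, A, B, hh, ⟨h1, h2, h3, h4, h5, h6⟩, hW⟩
  · rintro ⟨h, α, A, B, hh, ⟨h1, h2, h3, h4, h5, h6⟩, hW⟩
    exact ⟨h, α, A, B, hh, h1, h2, h3, h4, h5, h6, hW⟩

namespace FerrersData

variable {h : ℕ} {α : ℕ → ℕ} {A B : ℕ → ℂ × ℂ}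

lemma alpha_antitone (hD : FerrersData h α A B) {i i' : ℕ} (hi : 1 ≤ i) (hii' : i ≤ i')
    (hi' : i' ≤ h) : α i' ≤ α i := by
  induction i', hii' using Nat.le_induction with
  | base => exact le_rfl
  | succ n hin ih => exact (hD.alpha_succ_le n (by omega) hi').trans (ih (by omega))

lemma B_ne_zero_of_mem (hD : FerrersData h α A B) {i j : ℕ} (hi : 1 ≤ i) (hih : i ≤ h)
    (hj : 1 ≤ j) (hji : j ≤ α i) : B j ≠ 0 :=
  hD.B_ne_zero j hj (hji.trans (hD.alpha_antitone le_rfl hi hih))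

lemma cross_A_ne_zero_iff (hD : FerrersData h α A B) {c : ℂ × ℂ} (hc : c ≠ 0) {k : ℕ}
    (hk : 1 ≤ k) (hkh : k ≤ h) (hck : cross c (A k) = 0) {i : ℕ} (hi : 1 ≤ i) (hih : i ≤ h) :
    cross c (A i) ≠ 0 ↔ i ≠ k := by
  refine ⟨fun hci hik => hci (hik ▸ hck), fun hik hci => ?_⟩
  exact hD.cross_A_ne_zero i k hi hih hk hkh hik (cross_eq_zero_of_cross_eq_zero hc hci hck)

lemma cross_B_ne_zero_iff (hD : FerrersData h α A B) {d : ℂ × ℂ} (hd : d ≠ 0) {k : ℕ}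
    (hk : 1 ≤ k) (hkα : k ≤ α 1) (hdk : cross d (B k) = 0) {j : ℕ} (hj : 1 ≤ j)
    (hjα : j ≤ α 1) : cross d (B j) ≠ 0 ↔ j ≠ k := by
  refine ⟨fun hdj hjk => hdj (hjk ▸ hdk), fun hjk hdj => ?_⟩
  exact hD.cross_B_ne_zero j k hj hjα hk hkα hjk (cross_eq_zero_of_cross_eq_zero hd hdj hdk)

lemma ferrersSet_comp_eq_empty_or_isFerrers (hD : FerrersData h α A B) {h' : ℕ}
    {α' s t : ℕ → ℕ} (hs : StrictMono s) (hsh : ∀ i, i ≤ h' → s i ≤ h) (ht : StrictMono t)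
    (htα : 1 ≤ h' → ∀ j, j ≤ α' 1 → t j ≤ α 1) (hα'pos : ∀ i, 1 ≤ i → i ≤ h' → 1 ≤ α' i)
    (hα'succ : ∀ i, 1 ≤ i → i + 1 ≤ h' → α' (i + 1) ≤ α' i) :
    ferrersSet h' α' (A ∘ s) (B ∘ t) = ∅ ∨ IsFerrers (ferrersSet h' α' (A ∘ s) (B ∘ t)) := by
  rcases Nat.eq_zero_or_pos h' with rfl | hh'
  · exact Or.inl (ferrersSet_zero _ _ _)
  refine Or.inr (isFerrers_iff.mpr
    ⟨h', α', A ∘ s, B ∘ t, hh', ⟨hα'pos, hα'succ, ?_, ?_, ?_, ?_⟩, rfl⟩)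
  · exact fun i hi hih => hD.A_ne_zero (s i) (hi.trans (hs.id_le i)) (hsh i hih)
  · exact fun j hj hjα => hD.B_ne_zero (t j) (hj.trans (ht.id_le j)) (htα hh' j hjα)
  · exact fun i i' hi hih hi' hi'h hne => hD.cross_A_ne_zero (s i) (s i')
      (hi.trans (hs.id_le i)) (hsh i hih) (hi'.trans (hs.id_le i')) (hsh i' hi'h)
      (hs.injective.ne hne)
  · exact fun j j' hj hjα hj' hj'α hne => hD.cross_B_ne_zero (t j) (t j')
      (hj.trans (ht.id_le j)) (htα hh' j hjα) (hj'.trans (ht.id_le j')) (htα hh' j' hj'α)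
      (ht.injective.ne hne)

end FerrersData

/-- `skip k` enumerates `ℕ ∖ {k}` increasingly. -/
def skip (k i : ℕ) : ℕ := if i < k then i else i + 1

lemma skip_strictMono (k : ℕ) : StrictMono (skip k) := by
  intro i i' h
  simp only [skip]
  split_ifs <;> omega

lemma ferrersSet_skip_row {h k : ℕ} (hk : 1 ≤ k) (hkh : k ≤ h) (α : ℕ → ℕ) (A B : ℕ → ℂ × ℂ) :
    {P | ∃ i j, 1 ≤ i ∧ i ≤ h ∧ 1 ≤ j ∧ j ≤ α i ∧ i ≠ k ∧ P = (A i, B j)} =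
      ferrersSet (h - 1) (α ∘ skip k) (A ∘ skip k) B := by
  ext P
  simp only [ferrersSet, Set.mem_ofPred_eq, Function.comp_apply]
  constructor
  · rintro ⟨i, j, hi, hih, hj, hjα, hik, rfl⟩
    have hskip : skip k (if i < k then i else i - 1) = i := by
      simp only [skip]; split_ifs <;> omega
    refine ⟨if i < k then i else i - 1, j, by split_ifs <;> omega, by split_ifs <;> omega, hj,
      by rw [hskip]; exact hjα, by rw [hskip]⟩
  · rintro ⟨i, j, hi, hih, hj, hjα, rfl⟩
    exact ⟨skip k i, j, by simp only [skip]; split_ifs <;> omega,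
      by simp only [skip]; split_ifs <;> omega, hj, hjα, by simp only [skip]; split_ifs <;> omega,
      rfl⟩

lemma ferrersSet_skip_column {h k : ℕ} (hk : 1 ≤ k) (α : ℕ → ℕ) (A B : ℕ → ℂ × ℂ) :
    {P | ∃ i j, 1 ≤ i ∧ i ≤ h ∧ 1 ≤ j ∧ j ≤ α i ∧ j ≠ k ∧ P = (A i, B j)} =
      ferrersSet h (fun i => if k ≤ α i then α i - 1 else α i) A (B ∘ skip k) := by
  ext P
  simp only [ferrersSet, Set.mem_ofPred_eq, Function.comp_apply]
  constructor
  · rintro ⟨i, j, hi, hih, hj, hjα, hjk, rfl⟩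
    have hskip : skip k (if j < k then j else j - 1) = j := by
      simp only [skip]; split_ifs <;> omega
    refine ⟨i, if j < k then j else j - 1, hi, hih, by split_ifs <;> omega,
      by split_ifs <;> omega, by rw [hskip]⟩
  · rintro ⟨i, j, hi, hih, hj, hjα, rfl⟩
    refine ⟨i, skip k j, hi, hih, by simp only [skip]; split_ifs <;> omega,
      by simp only [skip] at hjα ⊢; split_ifs at hjα ⊢ <;> omega,
      by simp only [skip]; split_ifs <;> omega, rfl⟩

lemma exists_initial_segment (p : ℕ → Prop) (h : ℕ)
    (hp : ∀ i i', 1 ≤ i → i ≤ i' → i' ≤ h → p i' → p i) :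
    ∃ h' ≤ h, ∀ i, (1 ≤ i ∧ i ≤ h ∧ p i) ↔ (1 ≤ i ∧ i ≤ h') := by
  induction h with
  | zero => exact ⟨0, le_rfl, fun i => by omega⟩
  | succ n ih =>
    by_cases hn : p (n + 1)
    · refine ⟨n + 1, le_rfl, fun i => ⟨fun hi => ⟨hi.1, hi.2.1⟩, fun hi => ?_⟩⟩
      exact ⟨hi.1, hi.2, hp i (n + 1) hi.1 hi.2 le_rfl hn⟩
    · obtain ⟨h', hh', hiff⟩ := ih fun i i' hi hii' hi' => hp i i' hi hii' (by omega)
      refine ⟨h', by omega, fun i => ?_⟩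
      rw [← hiff]
      constructor
      · rintro ⟨hi, hin, hpi⟩
        have hin' : i ≠ n + 1 := by rintro rfl; exact hn hpi
        exact ⟨hi, by omega, hpi⟩
      · rintro ⟨hi, hin, hpi⟩
        exact ⟨hi, by omega, hpi⟩

lemma ferrersSet_eq_of_forall_iff {h h' : ℕ} {α : ℕ → ℕ}
    (hiff : ∀ i, (1 ≤ i ∧ i ≤ h ∧ 1 ≤ α i) ↔ (1 ≤ i ∧ i ≤ h')) (A B : ℕ → ℂ × ℂ) :
    ferrersSet h α A B = ferrersSet h' α A B := by
  ext P
  simp only [ferrersSet, Set.mem_ofPred_eq]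
  constructor
  · rintro ⟨i, j, hi, hih, hj, hjα, rfl⟩
    exact ⟨i, j, hi, ((hiff i).mp ⟨hi, hih, hj.trans hjα⟩).2, hj, hjα, rfl⟩
  · rintro ⟨i, j, hi, hih, hj, hjα, rfl⟩
    exact ⟨i, j, hi, ((hiff i).mpr ⟨hi, hih⟩).2.1, hj, hjα, rfl⟩

lemma sep_ferrersSet {h : ℕ} {α : ℕ → ℕ} {A B : ℕ → ℂ × ℂ} {p : (ℂ × ℂ) × (ℂ × ℂ) → Prop}
    {q : ℕ → ℕ → Prop}
    (hpq : ∀ i j, 1 ≤ i → i ≤ h → 1 ≤ j → j ≤ α i → (p (A i, B j) ↔ q i j)) :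
    {P ∈ ferrersSet h α A B | p P} =
      {P | ∃ i j, 1 ≤ i ∧ i ≤ h ∧ 1 ≤ j ∧ j ≤ α i ∧ q i j ∧ P = (A i, B j)} := by
  ext P
  simp only [ferrersSet, Set.mem_ofPred_eq]
  constructor
  · rintro ⟨⟨i, j, hi, hih, hj, hjα, rfl⟩, hp⟩
    exact ⟨i, j, hi, hih, hj, hjα, (hpq i j hi hih hj hjα).mp hp, rfl⟩
  · rintro ⟨i, j, hi, hih, hj, hjα, hq, rfl⟩
    exact ⟨⟨i, j, hi, hih, hj, hjα, rfl⟩, (hpq i j hi hih hj hjα).mpr hq⟩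

lemma IsFerrers.eq_empty_or_isFerrers_sep_Hf {W : Set ((ℂ × ℂ) × (ℂ × ℂ))} (hW : IsFerrers W)
    {c : ℂ × ℂ} (hc : c ≠ 0) : {P ∈ W | Hf c ∉ Ipt P} = ∅ ∨ IsFerrers {P ∈ W | Hf c ∉ Ipt P} := by
  obtain ⟨h, α, A, B, -, hD, rfl⟩ := isFerrers_iff.mp hW
  have hmem : ∀ i j, 1 ≤ i → i ≤ h → (Hf c ∉ Ipt (A i, B j) ↔ cross c (A i) ≠ 0) :=
    fun i j hi hih => (Hf_mem_Ipt_iff (hD.A_ne_zero i hi hih) c).not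
  by_cases hrow : ∃ k, 1 ≤ k ∧ k ≤ h ∧ cross c (A k) = 0
  · obtain ⟨k, hk, hkh, hck⟩ := hrow
    rw [sep_ferrersSet (q := fun i _ => i ≠ k) fun i j hi hih _ _ =>
      (hmem i j hi hih).trans (hD.cross_A_ne_zero_iff hc hk hkh hck hi hih),
      ferrersSet_skip_row hk hkh]
    have hskip : ∀ i, i ≤ h - 1 → skip k i ≤ h := fun i hi => by
      simp only [skip]; split_ifs <;> omega
    have hskip_pos : ∀ i, 1 ≤ i → 1 ≤ skip k i := fun i hi =>
      hi.trans ((skip_strictMono k).id_le i)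
    refine hD.ferrersSet_comp_eq_empty_or_isFerrers (skip_strictMono k) hskip strictMono_id
      (fun hh' j hj => ?_) (fun i hi hih => ?_) (fun i hi hih => ?_)
    · exact hj.trans (hD.alpha_antitone le_rfl (hskip_pos 1 le_rfl) (hskip 1 hh'))
    · exact hD.one_le_alpha _ (hskip_pos i hi) (hskip i hih)
    · exact hD.alpha_antitone (hskip_pos i hi) ((skip_strictMono k).monotone i.le_succ)
        (hskip (i + 1) hih)
  · right
    rwa [Set.sep_eq_self_iff_mem_true.mpr]
    rintro _ ⟨i, j, hi, hih, -, -, rfl⟩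
    exact (hmem i j hi hih).mpr fun hci => hrow ⟨i, hi, hih, hci⟩

lemma IsFerrers.eq_empty_or_isFerrers_sep_Vf {W : Set ((ℂ × ℂ) × (ℂ × ℂ))} (hW : IsFerrers W)
    {d : ℂ × ℂ} (hd : d ≠ 0) : {P ∈ W | Vf d ∉ Ipt P} = ∅ ∨ IsFerrers {P ∈ W | Vf d ∉ Ipt P} := by
  obtain ⟨h, α, A, B, -, hD, rfl⟩ := isFerrers_iff.mp hW
  have hmem : ∀ i j, 1 ≤ i → i ≤ h → 1 ≤ j → j ≤ α i →
      (Vf d ∉ Ipt (A i, B j) ↔ cross d (B j) ≠ 0) :=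
    fun i j hi hih hj hjα => (Vf_mem_Ipt_iff (hD.B_ne_zero_of_mem hi hih hj hjα) d).not
  by_cases hcol : ∃ k, 1 ≤ k ∧ k ≤ α 1 ∧ cross d (B k) = 0
  · obtain ⟨k, hk, hkα, hdk⟩ := hcol
    rw [sep_ferrersSet (q := fun _ j => j ≠ k) fun i j hi hih hj hjα =>
      (hmem i j hi hih hj hjα).trans (hD.cross_B_ne_zero_iff hd hk hkα hdk hj
        (hjα.trans (hD.alpha_antitone le_rfl hi hih))),
      ferrersSet_skip_column hk]
    set α' : ℕ → ℕ := fun i => if k ≤ α i then α i - 1 else α i with hα'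
    have hα'anti : ∀ i i', 1 ≤ i → i ≤ i' → i' ≤ h → α' i' ≤ α' i := fun i i' hi hii' hi' => by
      have := hD.alpha_antitone hi hii' hi'
      simp only [hα']; split_ifs <;> omega
    obtain ⟨h', hh', hrows⟩ := exists_initial_segment (fun i => 1 ≤ α' i) h
      fun i i' hi hii' hi' hp => hp.trans (hα'anti i i' hi hii' hi')
    rw [ferrersSet_eq_of_forall_iff hrows]
    refine hD.ferrersSet_comp_eq_empty_or_isFerrers strictMono_id (fun i hi => hi.trans hh')
      (skip_strictMono k) (fun _ j hj => ?_) (fun i hi hih => ((hrows i).mpr ⟨hi, hih⟩).2.2)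
      (fun i hi hih => hα'anti i (i + 1) hi i.le_succ (hih.trans hh'))
    simp only [hα', skip] at hj ⊢
    split_ifs at hj ⊢ <;> omega
  · right
    rwa [Set.sep_eq_self_iff_mem_true.mpr]
    rintro _ ⟨i, j, hi, hih, hj, hjα, rfl⟩
    exact (hmem i j hi hih hj hjα).mpr fun hdj =>
      hcol ⟨j, hj, hjα.trans (hD.alpha_antitone le_rfl hi hih), hdj⟩

lemma IsFerrers.isPrime_Ipt {W : Set ((ℂ × ℂ) × (ℂ × ℂ))} (hW : IsFerrers W) {P}
    (hP : P ∈ W) : (Ipt P).IsPrime := by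
  obtain ⟨h, α, A, B, -, hD, rfl⟩ := isFerrers_iff.mp hW
  obtain ⟨i, j, hi, hih, hj, hjα, rfl⟩ := hP
  exact Ipt_isPrime_s5 (hD.A_ne_zero i hi hih) (hD.B_ne_zero_of_mem hi hih hj hjα)

/-- Lemma 2.13: for a Ferrers configuration X and any degree (1,0) form H
(resp. degree (0,1) form V), ⟨H⟩ ⊓ I_X = ⟨H⟩ * I_{X∖H} and X∖H is again a
Ferrers configuration or empty (and similarly for V). -/
theorem statement5 (W : Set ((ℂ × ℂ) × (ℂ × ℂ))) (hW : IsFerrers W)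
    (c d : ℂ × ℂ) (hc : c ≠ 0) (hd : d ≠ 0) :
    (Ideal.span {Hf c} ⊓ IptsSet W =
        Ideal.span {Hf c} * IptsSet {P ∈ W | Hf c ∉ Ipt P} ∧
      ({P ∈ W | Hf c ∉ Ipt P} = ∅ ∨ IsFerrers {P ∈ W | Hf c ∉ Ipt P})) ∧
    (Ideal.span {Vf d} ⊓ IptsSet W =
        Ideal.span {Vf d} * IptsSet {P ∈ W | Vf d ∉ Ipt P} ∧
      ({P ∈ W | Vf d ∉ Ipt P} = ∅ ∨ IsFerrers {P ∈ W | Vf d ∉ Ipt P})) := by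
  have hprime : ∀ P ∈ W, (Ipt P).IsPrime := fun _ => hW.isPrime_Ipt
  exact ⟨⟨Ideal.span_singleton_inf_biInf_eq_mul hprime _, hW.eq_empty_or_isFerrers_sep_Hf hc⟩,
    ⟨Ideal.span_singleton_inf_biInf_eq_mul hprime _, hW.eq_empty_or_isFerrers_sep_Vf hd⟩⟩
end
end

section
/- Let P₁,…,P_m be pairwise distinct points of ℙ¹×ℙ¹, let H₁,…,H_t be pairwise non-proportional degree (1,0) forms and V₁,…,V_p pairwise non-proportional degree (0,1) forms, and suppose no point Pᵢ lies on any of the lines, i.e. Hⱼ ∉ I_{Pᵢ} and V_k ∉ I_{Pᵢ} for all i, j, k. Then (⋂_{i=1}^m I_{Pᵢ}) ⊓ (⋂_{j=1}^t ⟨Hⱼ⟩) ⊓ (⋂_{k=1}^p ⟨V_k⟩) = ⟨H₁⋯H_t · V₁⋯V_p⟩ * (⋂_{i=1}^m I_{Pᵢ}). -/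
/- Common setup: R = ℂ[x₀,x₁,y₀,y₁] as MvPolynomial (Fin 4) ℂ with
   x₀ = X 0, x₁ = X 1, y₀ = X 2, y₁ = X 3.
   `Hf a` is the horizontal form a₁x₀ - a₀x₁ of the point a = [a₀:a₁] ∈ ℙ¹;
   `Vf b` is the vertical form b₁y₀ - b₀y₁;
   `cross a b ≠ 0` says the (nonzero) pairs a, b are non-proportional,
   i.e. define distinct points of ℙ¹. -/

open MvPolynomial

noncomputable section

/-! The lines `Hⱼ`, `V_k` are pairwise non-associated primes of the UFD `R`, so a polynomial
lying on all of them is divisible by the product `F` of their forms. Each point ideal `I_P` is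
prime (the kernel of a retraction of `R` onto a polynomial ring in two variables) and, as no
point lies on a line, `F ∉ I_P`; hence `F * g ∈ ⋂ I_{Pᵢ}` forces `g ∈ ⋂ I_{Pᵢ}`. -/

namespace Ideal

variable {α : Type*} [CommSemiring α]

theorem iInf_span_singleton_eq_span_prod [DecompositionMonoid α] {ι : Type*} (s : Finset ι)
    (f : ι → α) (h : (s : Set ι).Pairwise (Function.onFun IsRelPrime f)) :
    ⨅ i ∈ s, span {f i} = span {∏ i ∈ s, f i} := by
  ext x
  simp only [Submodule.mem_iInf, mem_span_singleton]
  exact ⟨Finset.prod_dvd_of_isRelPrime h, fun hx i hi => (Finset.dvd_prod_of_mem f hi).trans hx⟩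

theorem span_singleton_inf_span_singleton_of_isRelPrime [DecompositionMonoid α] {a b : α}
    (h : IsRelPrime a b) : span {a} ⊓ span {b} = span {a * b} := by
  ext x
  simp only [mem_inf, mem_span_singleton]
  exact ⟨fun ⟨ha, hb⟩ => h.mul_dvd ha hb,
    fun hab => ⟨dvd_of_mul_right_dvd hab, dvd_of_mul_left_dvd hab⟩⟩

theorem inf_span_singleton_eq_span_singleton_mul {J : Ideal α} {F : α}
    (h : ∀ g, F * g ∈ J → g ∈ J) : J ⊓ span {F} = span {F} * J := by
  ext x
  simp only [mem_inf, mem_span_singleton, mem_span_singleton_mul]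
  constructor
  · rintro ⟨hx, g, rfl⟩
    exact ⟨g, h g hx, rfl⟩
  · rintro ⟨g, hg, rfl⟩
    exact ⟨J.mul_mem_left F hg, dvd_mul_right F g⟩

theorem mem_biInf_of_mul_mem {ι : Type*} {s : Finset ι} {Q : ι → Ideal α}
    (hQ : ∀ i ∈ s, (Q i).IsPrime) {F g : α} (hF : ∀ i ∈ s, F ∉ Q i)
    (hg : F * g ∈ ⨅ i ∈ s, Q i) : g ∈ ⨅ i ∈ s, Q i := by
  simp only [Submodule.mem_iInf] at hg ⊢
  exact fun i hi => ((hQ i hi).mem_or_mem (hg i hi)).resolve_left (hF i hi)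

end Ideal

namespace MvPolynomial

variable {σ S : Type*} [CommRing S]

theorem sub_aeval_mem_span {T : Set (MvPolynomial σ S)} {g : σ → MvPolynomial σ S}
    (hg : ∀ i, X i - g i ∈ Ideal.span T) (f : MvPolynomial σ S) :
    f - aeval g f ∈ Ideal.span T := by
  induction f using MvPolynomial.induction_on with
  | C a => simp
  | add f₁ f₂ ih₁ ih₂ =>
    rw [map_add, add_sub_add_comm]
    exact Ideal.add_mem _ ih₁ ih₂
  | mul_X f i ih =>
    have e : f * X i - aeval g (f * X i) = (f - aeval g f) * X i + aeval g f * (X i - g i) := by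
      rw [map_mul, aeval_X]; ring
    rw [e]
    exact Ideal.add_mem _ (Ideal.mul_mem_right _ _ ih) (Ideal.mul_mem_left _ _ (hg i))

theorem span_eq_ker_aeval {T : Set (MvPolynomial σ S)} {g : σ → MvPolynomial σ S}
    (hT : ∀ s ∈ T, aeval g s = 0) (hg : ∀ i, X i - g i ∈ Ideal.span T) :
    Ideal.span T = RingHom.ker (aeval g) := by
  refine le_antisymm (Ideal.span_le.mpr fun s hs => hT s hs) fun f hf => ?_
  simpa only [RingHom.mem_ker.mp hf, sub_zero] using sub_aeval_mem_span hg f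

theorem not_dvd_of_eval_eq_zero {f g : MvPolynomial σ S} (v : σ → S) (hf : eval v f = 0)
    (hg : eval v g ≠ 0) : ¬ f ∣ g := by
  rintro ⟨h, rfl⟩
  simp [hf] at hg

end MvPolynomial

theorem exists_mul_sub_mul_eq_one {K : Type*} [Field K] {a : K × K} (ha : a ≠ 0) :
    ∃ u v : K, a.2 * u - a.1 * v = 1 := by
  by_cases h₂ : a.2 = 0
  · have h₁ : a.1 ≠ 0 := fun h₁ => ha (Prod.ext h₁ h₂)
    exact ⟨0, -a.1⁻¹, by field_simp; ring⟩
  · exact ⟨a.2⁻¹, 0, by field_simp; ring⟩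

theorem exists_C_mul_Hf_eq_self (a : ℂ × ℂ) : ∃ u v : ℂ, C (a.2 * u - a.1 * v) * Hf a = Hf a := by
  rcases eq_or_ne a 0 with rfl | ha
  · exact ⟨0, 0, by simp [Hf]⟩
  · obtain ⟨u, v, huv⟩ := exists_mul_sub_mul_eq_one ha
    exact ⟨u, v, by simp [huv]⟩

theorem exists_C_mul_Vf_eq_self (b : ℂ × ℂ) : ∃ u v : ℂ, C (b.2 * u - b.1 * v) * Vf b = Vf b := by
  rcases eq_or_ne b 0 with rfl | hb
  · exact ⟨0, 0, by simp [Vf]⟩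
  · obtain ⟨u, v, huv⟩ := exists_mul_sub_mul_eq_one hb
    exact ⟨u, v, by simp [huv]⟩

theorem Ipt_isPrime_s6 (Q : (ℂ × ℂ) × (ℂ × ℂ)) : (Ipt Q).IsPrime := by
  obtain ⟨u, v, hH⟩ := exists_C_mul_Hf_eq_self Q.1
  obtain ⟨u', v', hV⟩ := exists_C_mul_Vf_eq_self Q.2
  set g : Fin 4 → R :=
    ![X 0 - C u * Hf Q.1, X 1 - C v * Hf Q.1, X 2 - C u' * Vf Q.2, X 3 - C v' * Vf Q.2]
  have hHg : aeval g (Hf Q.1) = Hf Q.1 - C (Q.1.2 * u - Q.1.1 * v) * Hf Q.1 := by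
    simp [g, Hf]; ring
  have hVg : aeval g (Vf Q.2) = Vf Q.2 - C (Q.2.2 * u' - Q.2.1 * v') * Vf Q.2 := by
    simp [g, Vf]; ring
  have hHmem : Hf Q.1 ∈ Ideal.span {Hf Q.1, Vf Q.2} := Ideal.subset_span (by simp)
  have hVmem : Vf Q.2 ∈ Ideal.span {Hf Q.1, Vf Q.2} := Ideal.subset_span (by simp)
  rw [Ipt, span_eq_ker_aeval (g := g) ?_ ?_]
  · exact RingHom.ker_isPrime _
  · rintro s (rfl | rfl)
    · rw [hHg, hH, sub_self]
    · rw [hVg, hV, sub_self]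
  · intro i
    fin_cases i <;> simp [g] <;> apply Ideal.mul_mem_left <;> assumption

theorem Hf_ne_zero {a : ℂ × ℂ} (ha : a ≠ 0) : Hf a ≠ 0 := fun h => by
  obtain ⟨u, v, huv⟩ := exists_mul_sub_mul_eq_one ha
  simpa [Hf, huv] using congrArg (eval ![u, v, 0, 0]) h

theorem Vf_ne_zero {b : ℂ × ℂ} (hb : b ≠ 0) : Vf b ≠ 0 := fun h => by
  obtain ⟨u, v, huv⟩ := exists_mul_sub_mul_eq_one hb
  simpa [Vf, huv] using congrArg (eval ![0, 0, u, v]) h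

theorem prime_Hf {a : ℂ × ℂ} (ha : a ≠ 0) : Prime (Hf a) := by
  have h := Ipt_isPrime_s6 (a, 0)
  simp only [Ipt, Vf, Prod.fst_zero, Prod.snd_zero, map_zero, zero_mul, sub_zero,
    Ideal.span_pair_zero] at h
  exact (Ideal.span_singleton_prime (Hf_ne_zero ha)).mp h

theorem prime_Vf {b : ℂ × ℂ} (hb : b ≠ 0) : Prime (Vf b) := by
  have h := Ipt_isPrime_s6 (0, b)
  simp only [Ipt, Hf, Prod.fst_zero, Prod.snd_zero, map_zero, zero_mul, sub_zero,
    Ideal.span_insert_zero] at h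
  exact (Ideal.span_singleton_prime (Vf_ne_zero hb)).mp h

theorem ne_zero_of_cross_ne_zero {a b : ℂ × ℂ} (h : cross a b ≠ 0) : a ≠ 0 := by
  rintro rfl
  simp [cross] at h

theorem isRelPrime_Hf_Hf {c c' : ℂ × ℂ} (h : cross c c' ≠ 0) : IsRelPrime (Hf c) (Hf c') := by
  refine (prime_Hf (ne_zero_of_cross_ne_zero h)).irreducible.isRelPrime_iff_not_dvd.mpr
    (not_dvd_of_eval_eq_zero ![c.1, c.2, 0, 0] (by simp [Hf]; ring) ?_)
  simpa [Hf, cross, mul_comm] using h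

theorem isRelPrime_Vf_Vf {d d' : ℂ × ℂ} (h : cross d d' ≠ 0) : IsRelPrime (Vf d) (Vf d') := by
  refine (prime_Vf (ne_zero_of_cross_ne_zero h)).irreducible.isRelPrime_iff_not_dvd.mpr
    (not_dvd_of_eval_eq_zero ![0, 0, d.1, d.2] (by simp [Vf]; ring) ?_)
  simpa [Vf, cross, mul_comm] using h

theorem isRelPrime_Hf_Vf {c d : ℂ × ℂ} (hc : c ≠ 0) (hd : d ≠ 0) : IsRelPrime (Hf c) (Vf d) := by
  obtain ⟨u, v, huv⟩ := exists_mul_sub_mul_eq_one hd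
  exact (prime_Hf hc).irreducible.isRelPrime_iff_not_dvd.mpr
    (not_dvd_of_eval_eq_zero ![c.1, c.2, u, v] (by simp [Hf]; ring) (by simp [Vf, huv]))

theorem statement6_general (m t p : ℕ)
    (P : ℕ → (ℂ × ℂ) × (ℂ × ℂ)) (c : ℕ → ℂ × ℂ) (d : ℕ → ℂ × ℂ)
    (hc0 : ∀ j ∈ Finset.Icc 1 t, c j ≠ 0)
    (hd0 : ∀ k ∈ Finset.Icc 1 p, d k ≠ 0)
    (hcd : ∀ j ∈ Finset.Icc 1 t, ∀ j' ∈ Finset.Icc 1 t, j ≠ j' → cross (c j) (c j') ≠ 0)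
    (hdd : ∀ k ∈ Finset.Icc 1 p, ∀ k' ∈ Finset.Icc 1 p, k ≠ k' → cross (d k) (d k') ≠ 0)
    (hHP : ∀ i ∈ Finset.Icc 1 m, ∀ j ∈ Finset.Icc 1 t, Hf (c j) ∉ Ipt (P i))
    (hVP : ∀ i ∈ Finset.Icc 1 m, ∀ k ∈ Finset.Icc 1 p, Vf (d k) ∉ Ipt (P i)) :
    (⨅ i ∈ Finset.Icc 1 m, Ipt (P i)) ⊓ (⨅ j ∈ Finset.Icc 1 t, Ideal.span {Hf (c j)}) ⊓
        (⨅ k ∈ Finset.Icc 1 p, Ideal.span {Vf (d k)}) =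
      Ideal.span {(∏ j ∈ Finset.Icc 1 t, Hf (c j)) * ∏ k ∈ Finset.Icc 1 p, Vf (d k)} *
        (⨅ i ∈ Finset.Icc 1 m, Ipt (P i)) := by
  have hH := Ideal.iInf_span_singleton_eq_span_prod (Finset.Icc 1 t) (fun j => Hf (c j))
    fun j hj j' hj' hne => isRelPrime_Hf_Hf (hcd j hj j' hj' hne)
  have hV := Ideal.iInf_span_singleton_eq_span_prod (Finset.Icc 1 p) (fun k => Vf (d k))
    fun k hk k' hk' hne => isRelPrime_Vf_Vf (hdd k hk k' hk' hne)
  have hHV : IsRelPrime (∏ j ∈ Finset.Icc 1 t, Hf (c j)) (∏ k ∈ Finset.Icc 1 p, Vf (d k)) :=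
    IsRelPrime.prod_left fun j hj => IsRelPrime.prod_right fun k hk =>
      isRelPrime_Hf_Vf (hc0 j hj) (hd0 k hk)
  have hF : ∀ i ∈ Finset.Icc 1 m,
      (∏ j ∈ Finset.Icc 1 t, Hf (c j)) * (∏ k ∈ Finset.Icc 1 p, Vf (d k)) ∉ Ipt (P i) := by
    intro i hi hmem
    have := Ipt_isPrime_s6 (P i)
    rcases this.mem_or_mem hmem with hmem | hmem
    · obtain ⟨j, hj, hjP⟩ := Ideal.IsPrime.prod_mem_iff.mp hmem
      exact hHP i hi j hj hjP
    · obtain ⟨k, hk, hkP⟩ := Ideal.IsPrime.prod_mem_iff.mp hmem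
      exact hVP i hi k hk hkP
  rw [hH, hV, inf_assoc, Ideal.span_singleton_inf_span_singleton_of_isRelPrime hHV]
  exact Ideal.inf_span_singleton_eq_span_singleton_mul fun g =>
    Ideal.mem_biInf_of_mul_mem (fun i _ => Ipt_isPrime_s6 (P i)) hF

/-- Theorem 4.3: for pairwise distinct points P₁,…,P_m of ℙ¹×ℙ¹, pairwise
non-proportional degree (1,0) forms H₁,…,H_t and degree (0,1) forms V₁,…,V_p with
no point on any of the lines, the intersection of all the ideals equals the principal
ideal generated by the product of the lines times the ideal of the points. -/
theorem statement6 (m t p : ℕ)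
    (P : ℕ → (ℂ × ℂ) × (ℂ × ℂ)) (c : ℕ → ℂ × ℂ) (d : ℕ → ℂ × ℂ)
    (hPval : ∀ i ∈ Finset.Icc 1 m, (P i).1 ≠ 0 ∧ (P i).2 ≠ 0)
    (hPd : ∀ i ∈ Finset.Icc 1 m, ∀ i' ∈ Finset.Icc 1 m, i ≠ i' →
      cross (P i).1 (P i').1 ≠ 0 ∨ cross (P i).2 (P i').2 ≠ 0)
    (hc0 : ∀ j ∈ Finset.Icc 1 t, c j ≠ 0)
    (hd0 : ∀ k ∈ Finset.Icc 1 p, d k ≠ 0)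
    (hcd : ∀ j ∈ Finset.Icc 1 t, ∀ j' ∈ Finset.Icc 1 t, j ≠ j' → cross (c j) (c j') ≠ 0)
    (hdd : ∀ k ∈ Finset.Icc 1 p, ∀ k' ∈ Finset.Icc 1 p, k ≠ k' → cross (d k) (d k') ≠ 0)
    (hHP : ∀ i ∈ Finset.Icc 1 m, ∀ j ∈ Finset.Icc 1 t, Hf (c j) ∉ Ipt (P i))
    (hVP : ∀ i ∈ Finset.Icc 1 m, ∀ k ∈ Finset.Icc 1 p, Vf (d k) ∉ Ipt (P i)) :
    (⨅ i ∈ Finset.Icc 1 m, Ipt (P i)) ⊓ (⨅ j ∈ Finset.Icc 1 t, Ideal.span {Hf (c j)}) ⊓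
        (⨅ k ∈ Finset.Icc 1 p, Ideal.span {Vf (d k)}) =
      Ideal.span {(∏ j ∈ Finset.Icc 1 t, Hf (c j)) * ∏ k ∈ Finset.Icc 1 p, Vf (d k)} *
        (⨅ i ∈ Finset.Icc 1 m, Ipt (P i)) :=
  statement6_general m t p P c d hc0 hd0 hcd hdd hHP hVP
end
end

section
/- Given staircase data, let {f₀,…,f_r} = A ⊔ B be a partition of the staircase generators with B nonempty and with both f₀ ∈ A and f_r ∈ A (a point splitting: A contains the product of all the vertical forms and the product of all the horizontal forms). Then μ(Ideal.span A ⊓ Ideal.span B) ≥ 2, where μ(I) = dim_ℂ (I / mI) with m = ⟨x₀,x₁,y₀,y₁⟩. In particular no point splitting is a Betti splitting. -/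
/- Common setup: R = ℂ[x₀,x₁,y₀,y₁] as MvPolynomial (Fin 4) ℂ with
   x₀ = X 0, x₁ = X 1, y₀ = X 2, y₁ = X 3.
   `Hf a` is the horizontal form a₁x₀ - a₀x₁ of the point a = [a₀:a₁] ∈ ℙ¹;
   `Vf b` is the vertical form b₁y₀ - b₀y₁;
   `cross a b ≠ 0` says the (nonzero) pairs a, b are non-proportional,
   i.e. define distinct points of ℙ¹. -/

open MvPolynomial

noncomputable section

/-- Staircase data: r ≥ 1, 0 = t₀ < t₁ < ⋯ < t_r, 0 = s₀ < s₁ < ⋯ < s_r,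
    pairwise distinct points A₁,…,A_{t_r} of ℙ¹ and pairwise distinct points
    B₁,…,B_{s_r} of ℙ¹ (all indexed starting at 1). -/
structure Staircase where
  r : ℕ
  t : ℕ → ℕ
  s : ℕ → ℕ
  A : ℕ → ℂ × ℂ
  B : ℕ → ℂ × ℂ
  hr : 1 ≤ r
  ht0 : t 0 = 0
  hs0 : s 0 = 0
  ht : ∀ k, k < r → t k < t (k + 1)
  hs : ∀ k, k < r → s k < s (k + 1)
  hA0 : ∀ i ∈ Finset.Icc 1 (t r), A i ≠ 0
  hB0 : ∀ j ∈ Finset.Icc 1 (s r), B j ≠ 0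
  hAd : ∀ i ∈ Finset.Icc 1 (t r), ∀ i' ∈ Finset.Icc 1 (t r), i ≠ i' → cross (A i) (A i') ≠ 0
  hBd : ∀ j ∈ Finset.Icc 1 (s r), ∀ j' ∈ Finset.Icc 1 (s r), j ≠ j' → cross (B j) (B j') ≠ 0

/-- The staircase generator f_k = H₁⋯H_{t_k} · V₁⋯V_{s_{r-k}}. -/
def stairGen (S : Staircase) (k : ℕ) : R :=
  (∏ i ∈ Finset.Icc 1 (S.t k), Hf (S.A i)) * ∏ j ∈ Finset.Icc 1 (S.s (S.r - k)), Vf (S.B j)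

/-- μ(I): the minimal number of generators of the ideal I. -/
def mu (I : Ideal R) : ℕ := sInf {n | ∃ G : Finset R, G.card = n ∧ Ideal.span (G : Set R) = I}

/-!
Pick `k` with `f_k ∈ B`; then `0 < k < r`. The products `f₀ f_k` and `f_k f_r` lie in
`span A ⊓ span B`; the first has x-degree `t_k`, the second y-degree `s_{r-k}`. If the
intersection were principal, its generator `g` would divide both, so (ℂ being a domain, degrees
add) every monomial of `g` would have bidegree at most `(t_k, s_{r-k})`. But every `f_j ∈ A` has
`t_j > t_k` or `s_{r-j} > s_{r-k}`, and the polynomials supported outside that box form an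
ideal, which therefore contains `span A ∋ g`.
-/

namespace MvPolynomial

variable {σ K : Type*} [CommRing K]

section WeightedDegree

variable (w : σ → ℕ)

theorem weightedHomogeneousComponent_mul_weightedTotalDegree (p q : MvPolynomial σ K) :
    weightedHomogeneousComponent w (weightedTotalDegree w p + weightedTotalDegree w q) (p * q) =
      weightedHomogeneousComponent w (weightedTotalDegree w p) p *
        weightedHomogeneousComponent w (weightedTotalDegree w q) q := by
  classical
  ext μ
  simp only [coeff_weightedHomogeneousComponent, coeff_mul, ite_zero_mul_ite_zero]
  have hbound : ∀ x ∈ Finset.HasAntidiagonal.antidiagonal μ, coeff x.1 p * coeff x.2 q ≠ 0 →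
      Finsupp.weight w x.1 ≤ weightedTotalDegree w p ∧
        Finsupp.weight w x.2 ≤ weightedTotalDegree w q ∧
          Finsupp.weight w x.1 + Finsupp.weight w x.2 = Finsupp.weight w μ := fun x hx hne =>
    ⟨le_weightedTotalDegree w (mem_support_iff.mpr (left_ne_zero_of_mul hne)),
      le_weightedTotalDegree w (mem_support_iff.mpr (right_ne_zero_of_mul hne)),
      by rw [← map_add, Finset.HasAntidiagonal.mem_antidiagonal.mp hx]⟩
  split_ifs with hμ
  · refine Finset.sum_congr rfl fun x hx => ?_
    by_cases hne : coeff x.1 p * coeff x.2 q = 0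
    · simp [hne]
    · have := hbound x hx hne
      rw [if_pos (by omega)]
  · refine (Finset.sum_eq_zero fun x hx => ?_).symm
    by_cases hne : coeff x.1 p * coeff x.2 q = 0
    · simp [hne]
    · have := hbound x hx hne
      rw [if_neg (by omega)]

theorem weightedHomogeneousComponent_weightedTotalDegree_ne_zero {p : MvPolynomial σ K}
    (hp : p ≠ 0) : weightedHomogeneousComponent w (weightedTotalDegree w p) p ≠ 0 := by
  classical
  obtain ⟨μ, hμ, hmax⟩ := Finset.exists_mem_eq_sup p.support (support_nonempty.mpr hp)
    (Finsupp.weight w)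
  rw [← support_nonempty]
  exact ⟨μ, by rwa [support_weightedHomogeneousComponent, Finset.mem_filter, weightedTotalDegree,
    hmax, eq_self, and_true]⟩

theorem weight_le_of_dvd_of_isWeightedHomogeneous [IsDomain K] {p q : MvPolynomial σ K} {n : ℕ}
    (hpq : p ∣ q) (hq : q ≠ 0) (hqn : IsWeightedHomogeneous w q n) {μ : σ →₀ ℕ}
    (hμ : μ ∈ p.support) : Finsupp.weight w μ ≤ n := by
  obtain ⟨c, rfl⟩ := hpq
  have htop := weightedHomogeneousComponent_mul_weightedTotalDegree w p c
  have hdeg : weightedTotalDegree w p + weightedTotalDegree w c = n := by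
    by_contra hne
    rw [hqn.weightedHomogeneousComponent_ne _ hne] at htop
    exact mul_ne_zero
      (weightedHomogeneousComponent_weightedTotalDegree_ne_zero w (left_ne_zero_of_mul hq))
      (weightedHomogeneousComponent_weightedTotalDegree_ne_zero w (right_ne_zero_of_mul hq))
      htop.symm
  have := le_weightedTotalDegree w hμ
  omega

end WeightedDegree

theorem support_subset_of_mem_span {s : Set (σ →₀ ℕ)} (hs : IsUpperSet s)
    {G : Set (MvPolynomial σ K)} (hG : ∀ f ∈ G, ↑f.support ⊆ s) {p : MvPolynomial σ K}
    (hp : p ∈ Ideal.span G) : ↑p.support ⊆ s := by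
  have hmem : ∀ f : MvPolynomial σ K,
      f ∈ Ideal.span ((fun μ => monomial μ (1 : K)) '' s) ↔ ↑f.support ⊆ s := fun f => by
    rw [mem_ideal_span_monomial_image]
    exact ⟨fun h μ hμ => (h μ hμ).elim fun ν hν => hs hν.2 hν.1,
      fun h μ hμ => ⟨μ, h hμ, le_rfl⟩⟩
  rw [← hmem]
  exact Ideal.span_le.mpr (fun f hf => (hmem f).mpr (hG f hf)) hp

theorem isUpperSet_setOf_lt_weight_or_lt_weight (w₁ w₂ : σ → ℕ) (a b : ℕ) :
    IsUpperSet {μ : σ →₀ ℕ | a < Finsupp.weight w₁ μ ∨ b < Finsupp.weight w₂ μ} := by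
  intro μ ν hμν hμ
  obtain ⟨d, rfl⟩ := le_iff_exists_add.mp hμν
  simp only [Set.mem_ofPred_eq, map_add] at hμ ⊢
  omega

theorem not_isPrincipal_of_le_span_of_support_outside_box [IsDomain K] {w₁ w₂ : σ → ℕ}
    {a b : ℕ} {G : Set (MvPolynomial σ K)}
    (hG : ∀ f ∈ G, ∀ μ ∈ f.support, a < Finsupp.weight w₁ μ ∨ b < Finsupp.weight w₂ μ)
    {J : Ideal (MvPolynomial σ K)} (hJ : J ≤ Ideal.span G) {u v : MvPolynomial σ K}
    (hu : u ∈ J) (hv : v ∈ J) (hu0 : u ≠ 0) (hv0 : v ≠ 0)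
    (hua : IsWeightedHomogeneous w₁ u a) (hvb : IsWeightedHomogeneous w₂ v b) :
    ¬ J.IsPrincipal := by
  rintro ⟨g, rfl⟩
  have hgu : g ∣ u := Ideal.mem_span_singleton.mp hu
  have hgv : g ∣ v := Ideal.mem_span_singleton.mp hv
  obtain ⟨μ, hμ⟩ : g.support.Nonempty :=
    support_nonempty.mpr fun hg => hu0 (zero_dvd_iff.mp (hg ▸ hgu))
  have houtside := support_subset_of_mem_span (isUpperSet_setOf_lt_weight_or_lt_weight w₁ w₂ a b)
    hG (hJ (Ideal.mem_span_singleton_self g)) hμ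
  have hx := weight_le_of_dvd_of_isWeightedHomogeneous w₁ hgu hu0 hua hμ
  have hy := weight_le_of_dvd_of_isWeightedHomogeneous w₂ hgv hv0 hvb hμ
  simp only [Set.mem_ofPred_eq] at houtside
  omega

end MvPolynomial

theorem two_le_mu_of_not_isPrincipal {I : Ideal R} (hI : ¬ I.IsPrincipal) : 2 ≤ mu I := by
  obtain ⟨G, hG⟩ := IsNoetherian.noetherian I
  obtain ⟨H, hcard, hspan⟩ :=
    Nat.sInf_mem (s := {n | ∃ G : Finset R, G.card = n ∧ Ideal.span (G : Set R) = I})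
      ⟨G.card, G, rfl, hG⟩
  by_contra! hlt
  rw [mu, ← hcard] at hlt
  interval_cases hH : H.card
  · rw [Finset.card_eq_zero.mp hH, Finset.coe_empty, Ideal.span_empty] at hspan
    exact hI (hspan ▸ bot_isPrincipal)
  · obtain ⟨g, rfl⟩ := Finset.card_eq_one.mp hH
    exact hI ⟨g, by rw [← hspan, Finset.coe_singleton]⟩

theorem isWeightedHomogeneous_Hf {w : Fin 4 → ℕ} {n : ℕ} (h0 : w 0 = n) (h1 : w 1 = n)
    (a : ℂ × ℂ) : IsWeightedHomogeneous w (Hf a) n :=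
  ((h0 ▸ isWeightedHomogeneous_X ℂ w 0).C_mul _).sub ((h1 ▸ isWeightedHomogeneous_X ℂ w 1).C_mul _)

theorem isWeightedHomogeneous_Vf {w : Fin 4 → ℕ} {n : ℕ} (h2 : w 2 = n) (h3 : w 3 = n)
    (b : ℂ × ℂ) : IsWeightedHomogeneous w (Vf b) n :=
  ((h2 ▸ isWeightedHomogeneous_X ℂ w 2).C_mul _).sub ((h3 ▸ isWeightedHomogeneous_X ℂ w 3).C_mul _)

namespace Staircase

variable (S : Staircase)

theorem t_strictMonoOn : StrictMonoOn S.t (Set.Iic S.r) :=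
  strictMonoOn_Iic_of_lt_succ fun m hm => by simpa using S.ht m hm

theorem s_strictMonoOn : StrictMonoOn S.s (Set.Iic S.r) :=
  strictMonoOn_Iic_of_lt_succ fun m hm => by simpa using S.hs m hm

theorem isWeightedHomogeneous_stairGen {w : Fin 4 → ℕ} {m n : ℕ}
    (hH : ∀ a, IsWeightedHomogeneous w (Hf a) m) (hV : ∀ b, IsWeightedHomogeneous w (Vf b) n)
    (k : ℕ) : IsWeightedHomogeneous w (stairGen S k) (m * S.t k + n * S.s (S.r - k)) := by
  have := (IsWeightedHomogeneous.prod (Finset.Icc 1 (S.t k)) _ _ fun i _ => hH (S.A i)).mul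
    (IsWeightedHomogeneous.prod (Finset.Icc 1 (S.s (S.r - k))) _ _ fun j _ => hV (S.B j))
  simpa [stairGen, mul_comm] using this

theorem stairGen_isWeightedHomogeneous_x (k : ℕ) :
    IsWeightedHomogeneous ![1, 1, 0, 0] (stairGen S k) (S.t k) := by
  simpa using S.isWeightedHomogeneous_stairGen (w := ![1, 1, 0, 0]) (m := 1) (n := 0)
    (isWeightedHomogeneous_Hf rfl rfl) (isWeightedHomogeneous_Vf rfl rfl) k

theorem stairGen_isWeightedHomogeneous_y (k : ℕ) :
    IsWeightedHomogeneous ![0, 0, 1, 1] (stairGen S k) (S.s (S.r - k)) := by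
  simpa using S.isWeightedHomogeneous_stairGen (w := ![0, 0, 1, 1]) (m := 0) (n := 1)
    (isWeightedHomogeneous_Hf rfl rfl) (isWeightedHomogeneous_Vf rfl rfl) k

theorem stairGen_ne_zero {k : ℕ} (hk : k ≤ S.r) : stairGen S k ≠ 0 := by
  have ht : S.t k ≤ S.t S.r := S.t_strictMonoOn.monotoneOn hk Set.self_mem_Iic hk
  have hs : S.s (S.r - k) ≤ S.s S.r :=
    S.s_strictMonoOn.monotoneOn (Nat.sub_le _ _) Set.self_mem_Iic (Nat.sub_le _ _)
  refine mul_ne_zero (Finset.prod_ne_zero_iff.mpr fun i hi => Hf_ne_zero (S.hA0 i ?_))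
    (Finset.prod_ne_zero_iff.mpr fun j hj => Vf_ne_zero (S.hB0 j ?_))
  · exact Finset.Icc_subset_Icc_right ht hi
  · exact Finset.Icc_subset_Icc_right hs hj

theorem stairGen_support_outside {j k : ℕ} (hj : j ≤ S.r) (hk : k ≤ S.r) (hjk : j ≠ k)
    {μ : Fin 4 →₀ ℕ} (hμ : μ ∈ (stairGen S j).support) :
    S.t k < Finsupp.weight ![1, 1, 0, 0] μ ∨ S.s (S.r - k) < Finsupp.weight ![0, 0, 1, 1] μ := by
  rw [S.stairGen_isWeightedHomogeneous_x j (mem_support_iff.mp hμ),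
    S.stairGen_isWeightedHomogeneous_y j (mem_support_iff.mp hμ)]
  rcases hjk.lt_or_gt with hjk | hkj
  · exact Or.inr (S.s_strictMonoOn (Nat.sub_le _ _) (Nat.sub_le _ _) (by omega))
  · exact Or.inl (S.t_strictMonoOn hk hj hkj)

end Staircase

/-- Corollary 5.9: for a point splitting, i.e. a partition {f₀,…,f_r} = A ⊔ B of the
staircase generators with f₀ ∈ A, f_r ∈ A and B nonempty (encoded by index sets
KA ⊔ KB = {0,…,r} with 0, r ∈ KA), the intersection needs at least two generators:
μ(span A ⊓ span B) ≥ 2.  In particular no point splitting is a Betti splitting. -/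
theorem statement12 (S : Staircase) (KA KB : Finset ℕ)
    (hUnion : KA ∪ KB = Finset.Iic S.r) (hDisj : Disjoint KA KB)
    (h0 : 0 ∈ KA) (hr : S.r ∈ KA) (hBne : KB.Nonempty) :
    2 ≤ mu (Ideal.span (stairGen S '' ↑KA) ⊓ Ideal.span (stairGen S '' ↑KB)) := by
  obtain ⟨k, hkB⟩ := hBne
  have hle : ∀ j ∈ KA ∪ KB, j ≤ S.r := fun j hj => Finset.mem_Iic.mp (hUnion ▸ hj)
  have hk : k ≤ S.r := hle k (Finset.mem_union_right _ hkB)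
  have hmem : ∀ {K : Finset ℕ} {j : ℕ}, j ∈ K → stairGen S j ∈ Ideal.span (stairGen S '' ↑K) :=
    fun hj => Ideal.subset_span ⟨_, hj, rfl⟩
  have hu : stairGen S 0 * stairGen S k ∈
      Ideal.span (stairGen S '' ↑KA) ⊓ Ideal.span (stairGen S '' ↑KB) :=
    ⟨Ideal.mul_mem_right _ _ (hmem h0), Ideal.mul_mem_left _ _ (hmem hkB)⟩
  have hv : stairGen S k * stairGen S S.r ∈
      Ideal.span (stairGen S '' ↑KA) ⊓ Ideal.span (stairGen S '' ↑KB) :=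
    ⟨Ideal.mul_mem_left _ _ (hmem hr), Ideal.mul_mem_right _ _ (hmem hkB)⟩
  have hu_x : IsWeightedHomogeneous ![1, 1, 0, 0] (stairGen S 0 * stairGen S k) (S.t k) := by
    simpa [S.ht0] using
      (S.stairGen_isWeightedHomogeneous_x 0).mul (S.stairGen_isWeightedHomogeneous_x k)
  have hv_y : IsWeightedHomogeneous ![0, 0, 1, 1] (stairGen S k * stairGen S S.r)
      (S.s (S.r - k)) := by
    simpa [S.hs0] using
      (S.stairGen_isWeightedHomogeneous_y k).mul (S.stairGen_isWeightedHomogeneous_y S.r)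
  refine two_le_mu_of_not_isPrincipal <|
    MvPolynomial.not_isPrincipal_of_le_span_of_support_outside_box ?_ inf_le_left hu hv
      (mul_ne_zero (S.stairGen_ne_zero (Nat.zero_le _)) (S.stairGen_ne_zero hk))
      (mul_ne_zero (S.stairGen_ne_zero hk) (S.stairGen_ne_zero le_rfl)) hu_x hv_y
  rintro _ ⟨j, hj, rfl⟩ μ hμ
  exact S.stairGen_support_outside (hle j (Finset.mem_union_left _ hj)) hk
    (fun hjk => Finset.disjoint_left.mp hDisj hj (hjk ▸ hkB)) hμ
end
end
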